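/- Let μ be the triadic doubling measure on [0,1] defined by μ([0,1]) = 1 and, for each triadic subinterval I, μ(I) = δ μ(πI) if I is the middle child of its triadic parent πI, and μ(I) = ((1−δ)/2) μ(πI) if I shares an endpoint with πI, where 0 < δ < 1/3. Then for α with 1 − ln(2/(1−δ))/ln 3 < α < 1, the restriction μ_I satisfies ‖I_α μ_I‖_{L^∞(I)} ≤ C_{α,δ} μ(I) |I|^{α−1} for every triadic interval I, with C_{α,δ} independent of I. -/

import Mathlib

open MeasureTheory ENNReal

/-- The triadic interval `[j/3^k, (j+1)/3^k)` of generation `k`. -/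
def triSet (k j : ℕ) : Set ℝ := Set.Ico ((j : ℝ) / 3 ^ k) (((j : ℝ) + 1) / 3 ^ k)

/-- `μ` is the triadic measure with parameter `δ`: `μ([0,1]) = 1`, the middle triadic child
gets fraction `δ` of the mass of its parent, and each outer child gets `(1-δ)/2`. -/
def IsTriadicMeasure (μ : Measure ℝ) (δ : ℝ) : Prop :=
  μ (triSet 0 0) = 1 ∧
  ∀ k j : ℕ, j < 3 ^ k →
    μ (triSet (k + 1) (3 * j)) = ENNReal.ofReal ((1 - δ) / 2) * μ (triSet k j) ∧
    μ (triSet (k + 1) (3 * j + 1)) = ENNReal.ofReal δ * μ (triSet k j) ∧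
    μ (triSet (k + 1) (3 * j + 2)) = ENNReal.ofReal ((1 - δ) / 2) * μ (triSet k j)

/-- The fractional integral `I_α ν(x) = ∫ |x-y|^{α-1} dν(y)` of a measure on `ℝ`. -/
noncomputable def fracInt (α : ℝ) (ν : Measure ℝ) (x : ℝ) : ℝ≥0∞ :=
  ∫⁻ y, ENNReal.ofReal (|x - y| ^ (α - 1)) ∂ν

/-!
Every triadic child carries at most the fraction `r = (1 - δ) / 2` of the mass of its parent
(the middle one too, as `δ ≤ r` for `δ ≤ 1/3`), so a descendant of `I` of generation `k + d` has
mass at most `r ^ d μ(I)`. For `x ∈ I` the closed ball of radius `3^{-(k+d)}` about `x` meets at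
most three triadic intervals of generation `k + d`, and on the shell
`3^{-(k+d+1)} < |x - y| ≤ 3^{-(k+d)}` the kernel is at most `3^{(k+d+1)(1-α)}`. Summing over the
shells bounds `I_α μ_I(x)` by `3 · 3^{(k+1)(1-α)} μ(I) ∑_d (3^{1-α} r)^d`, a geometric series
whose ratio is `< 1` exactly when `α > 1 - log (2 / (1 - δ)) / log 3`.
-/

open Metric

lemma mem_triSet_iff {k j : ℕ} {x : ℝ} :
    x ∈ triSet k j ↔ (j : ℝ) ≤ x * 3 ^ k ∧ x * 3 ^ k < j + 1 := by
  rw [triSet, Set.mem_Ico, div_le_iff₀ (by positivity), lt_div_iff₀ (by positivity)]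

lemma nonneg_of_mem_triSet {k j : ℕ} {x : ℝ} (hx : x ∈ triSet k j) : 0 ≤ x := by
  have h := (mem_triSet_iff.1 hx).1
  have : 0 ≤ x * 3 ^ k := le_trans (Nat.cast_nonneg j) h
  exact nonneg_of_mul_nonneg_left this (by positivity)

lemma abs_sub_le_of_mem_triSet {k j : ℕ} {x y : ℝ} (hx : x ∈ triSet k j) (hy : y ∈ triSet k j) :
    |x - y| ≤ ((3 : ℝ) ^ k)⁻¹ := by
  have hwidth : ((j : ℝ) + 1) / 3 ^ k - j / 3 ^ k = ((3 : ℝ) ^ k)⁻¹ := by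
    rw [← sub_div, add_sub_cancel_left, one_div]
  rw [abs_sub_le_iff]
  constructor <;> linarith [hx.1, hx.2, hy.1, hy.2]

lemma triSet_disjoint {k j j' : ℕ} (h : j ≠ j') : Disjoint (triSet k j) (triSet k j') := by
  refine Set.disjoint_left.2 fun x hx hx' => h ?_
  rw [mem_triSet_iff] at hx hx'
  have h₁ : (j : ℝ) < j' + 1 := by linarith [hx.1, hx'.2]
  have h₂ : (j' : ℝ) < j + 1 := by linarith [hx'.1, hx.2]
  norm_cast at h₁ h₂
  omega

lemma triSet_subset_triSet_div (k d a : ℕ) : triSet (k + d) a ⊆ triSet k (a / 3 ^ d) := by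
  intro x hx
  rw [mem_triSet_iff, pow_add, ← mul_assoc] at hx
  rw [mem_triSet_iff]
  have h3 : (0 : ℝ) < 3 ^ d := by positivity
  have hlow : ((a / 3 ^ d : ℕ) : ℝ) * 3 ^ d ≤ a := by
    exact_mod_cast Nat.div_mul_le_self a (3 ^ d)
  have hhigh : (a : ℝ) + 1 ≤ ((a / 3 ^ d : ℕ) + 1) * 3 ^ d := by
    have := Nat.lt_div_mul_add (a := a) (by positivity : 0 < 3 ^ d)
    exact_mod_cast (by rw [add_one_mul]; omega : a + 1 ≤ (a / 3 ^ d + 1) * 3 ^ d)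
  constructor
  · exact le_of_mul_le_mul_right (by linarith [hx.1]) h3
  · exact lt_of_mul_lt_mul_right (by linarith [hx.2]) h3.le

lemma exists_mem_triSet_of_mem_closedBall {x y : ℝ} (hx : 0 ≤ x) (hy : 0 ≤ y) {m : ℕ}
    (hxy : y ∈ closedBall x ((3 : ℝ) ^ m)⁻¹) :
    ∃ c ∈ Finset.Icc (⌊x * 3 ^ m⌋₊ - 1) (⌊x * 3 ^ m⌋₊ + 1), y ∈ triSet m c := by
  have h3 : (0 : ℝ) < 3 ^ m := by positivity
  refine ⟨⌊y * 3 ^ m⌋₊, ?_, mem_triSet_iff.2 ⟨Nat.floor_le (by positivity), Nat.lt_floor_add_one _⟩⟩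
  have hdist : |y * 3 ^ m - x * 3 ^ m| ≤ 1 := by
    rw [mem_closedBall, Real.dist_eq, ← one_div, le_div_iff₀ h3] at hxy
    rwa [← sub_mul, abs_mul, abs_of_pos h3]
  rw [abs_le] at hdist
  have hx₁ := Nat.floor_le (by positivity : 0 ≤ x * 3 ^ m)
  have hx₂ := Nat.lt_floor_add_one (x * 3 ^ m)
  have hy₁ := Nat.floor_le (by positivity : 0 ≤ y * 3 ^ m)
  have hy₂ := Nat.lt_floor_add_one (y * 3 ^ m)
  have h₁ : ⌊y * 3 ^ m⌋₊ < ⌊x * 3 ^ m⌋₊ + 2 := by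
    exact_mod_cast (by linarith : (⌊y * 3 ^ m⌋₊ : ℝ) < ⌊x * 3 ^ m⌋₊ + 2)
  have h₂ : ⌊x * 3 ^ m⌋₊ < ⌊y * 3 ^ m⌋₊ + 2 := by
    exact_mod_cast (by linarith : (⌊x * 3 ^ m⌋₊ : ℝ) < ⌊y * 3 ^ m⌋₊ + 2)
  rw [Finset.mem_Icc]
  omega

section Mass

variable {μ : Measure ℝ} {δ : ℝ}

lemma measure_triSet_succ_le (hμ : IsTriadicMeasure μ δ) (hδ : δ ≤ 1 / 3) {k a : ℕ}
    (ha : a < 3 ^ (k + 1)) :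
    μ (triSet (k + 1) a) ≤ ENNReal.ofReal ((1 - δ) / 2) * μ (triSet k (a / 3)) := by
  obtain ⟨b, i, hi, rfl⟩ : ∃ b i, i < 3 ∧ a = 3 * b + i :=
    ⟨a / 3, a % 3, Nat.mod_lt _ (by norm_num), (Nat.div_add_mod a 3).symm⟩
  have hb : (3 * b + i) / 3 = b := by omega
  rw [hb]
  obtain ⟨h₀, h₁, h₂⟩ := hμ.2 k b (by rw [pow_succ] at ha; omega)
  interval_cases i
  · exact h₀.le
  · rw [h₁]
    gcongr
    linarith
  · exact h₂.le

lemma measure_triSet_le_pow (hμ : IsTriadicMeasure μ δ) (hδ : δ ≤ 1 / 3) {k j : ℕ}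
    (hj : j < 3 ^ k) :
    ∀ (d a : ℕ), a / 3 ^ d = j →
      μ (triSet (k + d) a) ≤ ENNReal.ofReal (((1 - δ) / 2) ^ d) * μ (triSet k j)
  | 0, a, ha => by simp_all
  | d + 1, a, ha => by
    have hparent : a / 3 / 3 ^ d = j := by rwa [Nat.div_div_eq_div_mul, ← pow_succ']
    have ha : a < 3 ^ (k + d + 1) := by
      rw [add_assoc, pow_add, ← Nat.div_lt_iff_lt_mul (by positivity), ha]
      exact hj
    calc μ (triSet (k + d + 1) a)
        ≤ ENNReal.ofReal ((1 - δ) / 2) * μ (triSet (k + d) (a / 3)) :=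
          measure_triSet_succ_le hμ hδ ha
      _ ≤ ENNReal.ofReal ((1 - δ) / 2) *
            (ENNReal.ofReal (((1 - δ) / 2) ^ d) * μ (triSet k j)) := by
          gcongr
          exact measure_triSet_le_pow hμ hδ hj d _ hparent
      _ = ENNReal.ofReal (((1 - δ) / 2) ^ (d + 1)) * μ (triSet k j) := by
          rw [← mul_assoc, ← ENNReal.ofReal_mul (by linarith), ← pow_succ']

lemma measure_triSet_inter_le_pow (hμ : IsTriadicMeasure μ δ) (hδ : δ ≤ 1 / 3) {k j : ℕ}
    (hj : j < 3 ^ k) (d a : ℕ) :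
    μ (triSet (k + d) a ∩ triSet k j) ≤ ENNReal.ofReal (((1 - δ) / 2) ^ d) * μ (triSet k j) := by
  by_cases ha : a / 3 ^ d = j
  · rw [Set.inter_eq_left.2 (ha ▸ triSet_subset_triSet_div k d a)]
    exact measure_triSet_le_pow hμ hδ hj d a ha
  · rw [((triSet_disjoint ha).mono_left (triSet_subset_triSet_div k d a)).inter_eq,
      measure_empty]
    exact zero_le

lemma measure_closedBall_inter_triSet_le (hμ : IsTriadicMeasure μ δ) (hδ : δ ≤ 1 / 3)
    {k j : ℕ} (hj : j < 3 ^ k) {x : ℝ} (hx : 0 ≤ x) (d : ℕ) :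
    μ (closedBall x ((3 : ℝ) ^ (k + d))⁻¹ ∩ triSet k j) ≤
      3 * ENNReal.ofReal (((1 - δ) / 2) ^ d) * μ (triSet k j) := by
  set b := ⌊x * 3 ^ (k + d)⌋₊
  have hcover : closedBall x ((3 : ℝ) ^ (k + d))⁻¹ ∩ triSet k j ⊆
      ⋃ c ∈ Finset.Icc (b - 1) (b + 1), triSet (k + d) c ∩ triSet k j := by
    rintro y ⟨hyx, hyI⟩
    obtain ⟨c, hc, hyc⟩ := exists_mem_triSet_of_mem_closedBall hx (nonneg_of_mem_triSet hyI) hyx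
    exact Set.mem_biUnion hc ⟨hyc, hyI⟩
  have hcard : ((Finset.Icc (b - 1) (b + 1)).card : ℝ≥0∞) ≤ 3 := by
    rw [Nat.card_Icc]
    exact_mod_cast (by omega : b + 1 + 1 - (b - 1) ≤ 3)
  calc μ (closedBall x ((3 : ℝ) ^ (k + d))⁻¹ ∩ triSet k j)
      ≤ ∑ c ∈ Finset.Icc (b - 1) (b + 1), μ (triSet (k + d) c ∩ triSet k j) :=
        (measure_mono hcover).trans (measure_biUnion_finset_le _ _)
    _ ≤ ∑ _c ∈ Finset.Icc (b - 1) (b + 1), ENNReal.ofReal (((1 - δ) / 2) ^ d) * μ (triSet k j) :=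
        Finset.sum_le_sum fun c _ => measure_triSet_inter_le_pow hμ hδ hj d c
    _ ≤ 3 * ENNReal.ofReal (((1 - δ) / 2) ^ d) * μ (triSet k j) := by
        rw [Finset.sum_const, nsmul_eq_mul, mul_assoc]
        gcongr

end Mass

lemma ofReal_abs_sub_rpow_le_tsum {β : ℝ} (hβ : β < 0) {k : ℕ} {x y : ℝ}
    (hxy : |x - y| ≤ ((3 : ℝ) ^ k)⁻¹) :
    ENNReal.ofReal (|x - y| ^ β) ≤ ∑' d : ℕ, (closedBall x ((3 : ℝ) ^ (k + d))⁻¹).indicator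
      (fun _ => ENNReal.ofReal ((((3 : ℝ) ^ (k + d + 1))⁻¹) ^ β)) y := by
  rcases (abs_nonneg (x - y)).eq_or_lt with h0 | hpos
  · rw [← h0, Real.zero_rpow hβ.ne, ENNReal.ofReal_zero]
    exact zero_le
  set t := |x - y|
  have h3 : (0 : ℝ) < 3 ^ k := by positivity
  have h1 : 1 ≤ (t * 3 ^ k)⁻¹ := by
    rwa [one_le_inv₀ (by positivity), ← le_div_iff₀ h3, one_div]
  obtain ⟨d, hd₁, hd₂⟩ := exists_nat_pow_near h1 (by norm_num : (1 : ℝ) < 3)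
  have hin : y ∈ closedBall x ((3 : ℝ) ^ (k + d))⁻¹ := by
    rw [mem_closedBall, Real.dist_eq, abs_sub_comm, pow_add]
    rw [← one_div, le_div_iff₀ (by positivity)] at hd₁
    rw [← one_div, le_div_iff₀ (by positivity)]
    linarith
  have hlow : ((3 : ℝ) ^ (k + d + 1))⁻¹ ≤ t := by
    rw [← one_div, div_lt_iff₀ (by positivity)] at hd₂
    rw [inv_le_iff_one_le_mul₀ (by positivity), add_assoc, pow_add]
    linarith
  calc ENNReal.ofReal (t ^ β)
      ≤ ENNReal.ofReal ((((3 : ℝ) ^ (k + d + 1))⁻¹) ^ β) :=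
        ENNReal.ofReal_le_ofReal (Real.rpow_le_rpow_of_nonpos (by positivity) hlow hβ.le)
    _ = (closedBall x ((3 : ℝ) ^ (k + d))⁻¹).indicator
          (fun _ => ENNReal.ofReal ((((3 : ℝ) ^ (k + d + 1))⁻¹) ^ β)) y := by
        rw [Set.indicator_of_mem hin]
    _ ≤ _ := ENNReal.le_tsum d

lemma fracInt_le_tsum {α : ℝ} (hα : α < 1) {ν : Measure ℝ} {x : ℝ} {k : ℕ}
    (hν : ∀ᵐ y ∂ν, |x - y| ≤ ((3 : ℝ) ^ k)⁻¹) :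
    fracInt α ν x ≤ ∑' d : ℕ, ENNReal.ofReal ((((3 : ℝ) ^ (k + d + 1))⁻¹) ^ (α - 1)) *
      ν (closedBall x ((3 : ℝ) ^ (k + d))⁻¹) := by
  calc fracInt α ν x
      ≤ ∫⁻ y, ∑' d : ℕ, (closedBall x ((3 : ℝ) ^ (k + d))⁻¹).indicator
          (fun _ => ENNReal.ofReal ((((3 : ℝ) ^ (k + d + 1))⁻¹) ^ (α - 1))) y ∂ν :=
        lintegral_mono_ae (hν.mono fun y hy => ofReal_abs_sub_rpow_le_tsum (by linarith) hy)
    _ = _ := by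
        rw [lintegral_tsum fun d =>
          (measurable_const.indicator measurableSet_closedBall).aemeasurable]
        simp only [lintegral_indicator_const measurableSet_closedBall]

lemma three_inv_rpow_mul_lt_one {α δ : ℝ} (hδ : δ < 1)
    (hα : 1 - Real.log (2 / (1 - δ)) / Real.log 3 < α) :
    (3 : ℝ)⁻¹ ^ (α - 1) * ((1 - δ) / 2) < 1 := by
  have hlog3 : 0 < Real.log 3 := Real.log_pos (by norm_num)
  have hlog : Real.log ((1 - δ) / 2) < (α - 1) * Real.log 3 := by
    rw [← inv_div, Real.log_inv]
    have := (lt_div_iff₀ hlog3).1 (by linarith : 1 - α < Real.log (2 / (1 - δ)) / Real.log 3)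
    linarith
  rw [Real.inv_rpow (by norm_num), inv_mul_lt_iff₀ (by positivity), mul_one]
  exact (Real.lt_rpow_iff_log_lt (by linarith) (by norm_num)).2 hlog

theorem stmt_16_general (μ : Measure ℝ) (δ : ℝ) (hδ : δ < 1 / 3)
    (hμ : IsTriadicMeasure μ δ) (α : ℝ)
    (hα1 : 1 - Real.log (2 / (1 - δ)) / Real.log 3 < α) (hα2 : α < 1) :
    ∃ C > (0:ℝ), ∀ k j : ℕ, j < 3 ^ k → ∀ x ∈ triSet k j,
      fracInt α (μ.restrict (triSet k j)) x ≤
        ENNReal.ofReal (C * (((3 : ℝ) ^ k)⁻¹) ^ (α - 1)) * μ (triSet k j) := by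
  set u : ℝ := (3 : ℝ)⁻¹ ^ (α - 1)
  set r : ℝ := (1 - δ) / 2
  have hu : 0 < u := by positivity
  have hr : 0 ≤ r := div_nonneg (by linarith) zero_le_two
  have hq : u * r < 1 := three_inv_rpow_mul_lt_one (by linarith) hα1
  have hpow (n : ℕ) : (((3 : ℝ) ^ n)⁻¹) ^ (α - 1) = u ^ n := by
    rw [← inv_pow, Real.rpow_pow_comm (by norm_num)]
  refine ⟨3 * u / (1 - u * r), by have := sub_pos.2 hq; positivity, fun k j hj x hx => ?_⟩
  have hnear : ∀ᵐ y ∂μ.restrict (triSet k j), |x - y| ≤ ((3 : ℝ) ^ k)⁻¹ :=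
    (ae_restrict_mem measurableSet_Ico).mono fun y hy => abs_sub_le_of_mem_triSet hx hy
  calc fracInt α (μ.restrict (triSet k j)) x
      ≤ ∑' d : ℕ, ENNReal.ofReal (u ^ (k + d + 1)) *
          μ (closedBall x ((3 : ℝ) ^ (k + d))⁻¹ ∩ triSet k j) := by
        simpa only [hpow, Measure.restrict_apply measurableSet_closedBall] using
          fracInt_le_tsum hα2 hnear
    _ ≤ ∑' d : ℕ, ENNReal.ofReal (u ^ (k + d + 1)) *
          (3 * ENNReal.ofReal (r ^ d) * μ (triSet k j)) := by
        gcongr with d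
        exact measure_closedBall_inter_triSet_le hμ hδ.le hj (nonneg_of_mem_triSet hx) d
    _ = ENNReal.ofReal (∑' d : ℕ, 3 * u ^ (k + 1) * (u * r) ^ d) * μ (triSet k j) := by
        rw [ENNReal.ofReal_tsum_of_nonneg (fun d => by positivity)
          ((summable_geometric_of_lt_one (by positivity) hq).mul_left _), ← ENNReal.tsum_mul_right]
        refine tsum_congr fun d => ?_
        rw [show 3 * u ^ (k + 1) * (u * r) ^ d = u ^ (k + d + 1) * (3 * r ^ d) by
            rw [mul_pow]; ring,
          ENNReal.ofReal_mul (by positivity), ENNReal.ofReal_mul (by norm_num),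
          ENNReal.ofReal_ofNat]
        ring
    _ = ENNReal.ofReal (3 * u / (1 - u * r) * (((3 : ℝ) ^ k)⁻¹) ^ (α - 1)) * μ (triSet k j) := by
        rw [tsum_mul_left, tsum_geometric_of_lt_one (by positivity) hq, hpow]
        congr 2
        ring

/-- For the triadic doubling measure `μ` with parameter `0 < δ < 1/3` and
`1 - ln(2/(1-δ))/ln 3 < α < 1`, one has `‖I_α μ_I‖_{L^∞(I)} ≤ C_{α,δ} μ(I) |I|^{α-1}` for
every triadic interval `I`, with `C_{α,δ}` independent of `I`. -/
theorem stmt_16 (μ : Measure ℝ) (δ : ℝ) (hδ0 : 0 < δ) (hδ : δ < 1 / 3)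
    (hμ : IsTriadicMeasure μ δ) (α : ℝ)
    (hα1 : 1 - Real.log (2 / (1 - δ)) / Real.log 3 < α) (hα2 : α < 1) :
    ∃ C > (0:ℝ), ∀ k j : ℕ, j < 3 ^ k → ∀ x ∈ triSet k j,
      fracInt α (μ.restrict (triSet k j)) x ≤
        ENNReal.ofReal (C * (((3 : ℝ) ^ k)⁻¹) ^ (α - 1)) * μ (triSet k j) :=
  stmt_16_general μ δ hδ hμ α hα1 hα2
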